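/- arXiv:1305.7089 — 5 statements merged into one kernel-verified Lean document; each statement's English description precedes it below -/
import Mathlib

section
/- Let u : ℝ² → ℝ² be smooth, 2π-periodic, and divergence-free. Then ∫_Q ((u·∇)u)·Δu dx = 0, where Q = [0,2π]² is the period cell. (This is the two-dimensional orthogonality property (B(u,u), Au)_{L²} = 0 used for the enstrophy balance.) -/
open MeasureTheory Filter Topology Real Set
open scoped RealInnerProductSpace
noncomputable section

/-- The plane, with its Euclidean structure. -/
abbrev E2 : Type := EuclideanSpace ℝ (Fin 2)

/-- Partial derivative `∂ᵢ g` at `x`. -/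
def pd (i : Fin 2) (g : E2 → ℝ) (x : E2) : ℝ := fderiv ℝ g x (EuclideanSpace.single i 1)

/-- Laplacian `Δ g` at `x`. -/
def lap (g : E2 → ℝ) (x : E2) : ℝ := ∑ i : Fin 2, pd i (pd i g) x

/-- Perpendicular gradient `∇^⊥ψ = (−∂₂ψ, ∂₁ψ)`. -/
def gradPerp (ψ : E2 → ℝ) (x : E2) : Fin 2 → ℝ := ![-(pd 1 ψ x), pd 0 ψ x]

/-- The period cell `Q = [0,2π]²`. -/
def Q2 : Set E2 := {x : E2 | x 0 ∈ Set.Icc 0 (2 * π) ∧ x 1 ∈ Set.Icc 0 (2 * π)}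

/-- A function on `ℝ²` is `2π`-periodic if it is invariant under translation by
`2π eᵢ`, `i = 1,2`. -/
def Per2 {α : Type*} (v : E2 → α) : Prop :=
  ∀ (x : E2) (i : Fin 2), v (x + (2 * π) • EuclideanSpace.single i 1) = v x

/-!
For divergence-free `u` with vorticity `ω = ∂₀u₁ - ∂₁u₀` one has `Δu = ∇^⊥ω = (-∂₁ω, ∂₀ω)`.
With `a = (u·∇)u₀` and `b = (u·∇)u₁` the integrand is therefore
`b ∂₀ω - a ∂₁ω = ∂₀(bω) - ∂₁(aω) - ω (∂₀b - ∂₁a)`. Again because `div u = 0`, the curl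
`∂₀b - ∂₁a` of `(u·∇)u` is `(u·∇)ω`, and `ω (u·∇)ω = div (u ω²/2)`. Hence the integrand is the
divergence of the periodic field `(bω - u₀ω²/2, -aω - u₁ω²/2)`, whose integral over the period
cell vanishes by the divergence theorem: the contributions of opposite faces cancel.
-/

section PartialDerivatives

variable {f g : E2 → ℝ} {x : E2} {i : Fin 2}

lemma pd_add (hf : DifferentiableAt ℝ f x) (hg : DifferentiableAt ℝ g x) :
    pd i (fun y => f y + g y) x = pd i f x + pd i g x := by
  simp [pd, fderiv_fun_add hf hg]

lemma pd_sub (hf : DifferentiableAt ℝ f x) (hg : DifferentiableAt ℝ g x) :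
    pd i (fun y => f y - g y) x = pd i f x - pd i g x := by
  simp [pd, fderiv_fun_sub hf hg]

lemma pd_neg : pd i (fun y => -f y) x = -pd i f x := by
  simp [pd, fderiv_fun_neg]

lemma pd_mul (hf : DifferentiableAt ℝ f x) (hg : DifferentiableAt ℝ g x) :
    pd i (fun y => f y * g y) x = pd i f x * g x + f x * pd i g x := by
  simp [pd, fderiv_fun_mul hf hg]
  ring

lemma pd_div_const (hf : DifferentiableAt ℝ f x) (c : ℝ) :
    pd i (fun y => f y / c) x = pd i f x / c := by
  simp only [div_eq_mul_inv]
  simp [pd, fderiv_mul_const hf]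
  ring

lemma pd_pow (hf : DifferentiableAt ℝ f x) (n : ℕ) :
    pd i (fun y => f y ^ n) x = n * f x ^ (n - 1) * pd i f x := by
  simp [pd, fderiv_fun_pow n hf]

lemma pd_const (c : ℝ) : pd i (fun _ => c) x = 0 := by
  simp [pd]

lemma contDiff_pd {n : WithTop ℕ∞} (hg : ContDiff ℝ (n + 1) g) (i : Fin 2) :
    ContDiff ℝ n (pd i g) :=
  (hg.fderiv_right le_rfl).clm_apply contDiff_const

lemma differentiable_pd (hg : ContDiff ℝ 2 g) (i : Fin 2) : Differentiable ℝ (pd i g) :=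
  (contDiff_pd hg i).differentiable one_ne_zero

lemma pd_pd_eq_fderiv_fderiv (hg : ContDiff ℝ 2 g) (i j : Fin 2) (x : E2) :
    pd i (pd j g) x =
      fderiv ℝ (fderiv ℝ g) x (EuclideanSpace.single i 1) (EuclideanSpace.single j 1) := by
  have hdg : DifferentiableAt ℝ (fderiv ℝ g) x :=
    (hg.fderiv_right (m := 1) le_rfl).differentiable one_ne_zero x
  change fderiv ℝ (fun y => fderiv ℝ g y (EuclideanSpace.single j 1)) x _ = _
  simp [fderiv_clm_apply hdg (differentiableAt_const _)]

lemma pd_comm (hg : ContDiff ℝ 2 g) (i j : Fin 2) (x : E2) :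
    pd i (pd j g) x = pd j (pd i g) x := by
  rw [pd_pd_eq_fderiv_fderiv hg, pd_pd_eq_fderiv_fderiv hg]
  exact hg.contDiffAt.isSymmSndFDerivAt (by simp) _ _

lemma per2_pd (hg : Per2 g) (i : Fin 2) : Per2 (pd i g) := by
  intro x j
  rw [pd, ← fderiv_comp_add_right, show (fun y => g (y + _)) = g from funext (hg · j)]
  rfl

end PartialDerivatives

lemma setIntegral_Q2_eq_setIntegral_Icc (f : E2 → ℝ) :
    ∫ x in Q2, f x = ∫ y in Icc (0 : Fin 2 → ℝ) (fun _ => 2 * π), f (WithLp.toLp 2 y) := by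
  have hQ : WithLp.toLp 2 ⁻¹' Q2 = Icc (0 : Fin 2 → ℝ) (fun _ => 2 * π) := by
    ext y
    simp [Q2, Pi.le_def, Fin.forall_fin_two]
    tauto
  rw [← hQ, (PiLp.volume_preserving_toLp (Fin 2)).setIntegral_preimage_emb
    (MeasurableEquiv.toLp 2 (Fin 2 → ℝ)).measurableEmbedding]

lemma toLp_insertNth_two_pi (i : Fin 2) (y : Fin 1 → ℝ) :
    WithLp.toLp 2 (i.insertNth (α := fun _ => ℝ) (2 * π) y) =
      WithLp.toLp 2 (i.insertNth (α := fun _ => ℝ) 0 y) + (2 * π) • EuclideanSpace.single i 1 := by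
  rw [eq_add_of_sub_eq (Fin.insertNth_sub_same (α := fun _ => ℝ) i (2 * π) 0 y)]
  ext j
  simp [Pi.single_apply, add_comm]

theorem integral_Q2_pd_add_pd_eq_zero {F₀ F₁ : E2 → ℝ} (h₀ : ContDiff ℝ 1 F₀)
    (h₁ : ContDiff ℝ 1 F₁) (hp₀ : Per2 F₀) (hp₁ : Per2 F₁) :
    ∫ x in Q2, (pd 0 F₀ x + pd 1 F₁ x) = 0 := by
  set e : (Fin 2 → ℝ) ≃L[ℝ] E2 := (PiLp.continuousLinearEquiv 2 ℝ (fun _ : Fin 2 => ℝ)).symm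
  set F : Fin 2 → E2 → ℝ := ![F₀, F₁]
  have hF : ∀ i, ContDiff ℝ 1 (F i) := Fin.forall_fin_two.2 ⟨h₀, h₁⟩
  have hpF : ∀ i, Per2 (F i) := Fin.forall_fin_two.2 ⟨hp₀, hp₁⟩
  have hint : IntegrableOn (fun y => ∑ i, (fderiv ℝ (F i) (e y)).comp (e : (Fin 2 → ℝ) →L[ℝ] E2)
      (Pi.single i 1)) (Icc 0 fun _ => 2 * π) := by
    refine Continuous.integrableOn_Icc (continuous_finsetSum _ fun i _ => ?_)
    exact ((hF i).continuous_fderiv one_ne_zero).comp e.continuous |>.clm_apply continuous_const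
  have hdiv := integral_divergence_of_hasFDerivAt_off_countable'
    (a := 0) (b := fun _ => 2 * π) (fun _ => by positivity)
    (fun i y => F i (e y)) (fun i y => (fderiv ℝ (F i) (e y)).comp (e : (Fin 2 → ℝ) →L[ℝ] E2))
    ∅ countable_empty (fun i => ((hF i).continuous.comp e.continuous).continuousOn)
    (fun y _ i => ((hF i).differentiable one_ne_zero (e y)).hasFDerivAt.comp y e.hasFDerivAt)
    hint
  rw [setIntegral_Q2_eq_setIntegral_Icc]
  convert hdiv using 1
  · simp [Fin.sum_univ_two, F, e, pd]
  · refine (Finset.sum_eq_zero fun i _ => sub_eq_zero_of_eq ?_).symm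
    refine integral_congr_ae (.of_forall fun y => ?_)
    simp only [e, PiLp.coe_symm_continuousLinearEquiv, Pi.zero_apply]
    rw [toLp_insertNth_two_pi]
    exact hpF i _ i

section Advection

variable {u₀ u₁ f : E2 → ℝ}

def advect (u₀ u₁ f : E2 → ℝ) : E2 → ℝ := fun y => u₀ y * pd 0 f y + u₁ y * pd 1 f y

def vort (u₀ u₁ : E2 → ℝ) : E2 → ℝ := fun y => pd 0 u₁ y - pd 1 u₀ y

def fluxFst (u₀ u₁ : E2 → ℝ) : E2 → ℝ :=
  fun y => advect u₀ u₁ u₁ y * vort u₀ u₁ y - u₀ y * vort u₀ u₁ y ^ 2 / 2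

def fluxSnd (u₀ u₁ : E2 → ℝ) : E2 → ℝ :=
  fun y => -(advect u₀ u₁ u₀ y * vort u₀ u₁ y) - u₁ y * vort u₀ u₁ y ^ 2 / 2

lemma contDiff_advect {n : WithTop ℕ∞} (hu₀ : ContDiff ℝ n u₀) (hu₁ : ContDiff ℝ n u₁)
    (hf : ContDiff ℝ (n + 1) f) : ContDiff ℝ n (advect u₀ u₁ f) :=
  (hu₀.mul (contDiff_pd hf 0)).add (hu₁.mul (contDiff_pd hf 1))

lemma contDiff_vort {n : WithTop ℕ∞} (hu₀ : ContDiff ℝ (n + 1) u₀)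
    (hu₁ : ContDiff ℝ (n + 1) u₁) : ContDiff ℝ n (vort u₀ u₁) :=
  (contDiff_pd hu₁ 0).sub (contDiff_pd hu₀ 1)

lemma contDiff_fluxFst (h₀ : ContDiff ℝ 2 u₀) (h₁ : ContDiff ℝ 2 u₁) :
    ContDiff ℝ 1 (fluxFst u₀ u₁) := by
  have h₀' : ContDiff ℝ 1 u₀ := h₀.of_le one_le_two
  have hω : ContDiff ℝ 1 (vort u₀ u₁) := contDiff_vort h₀ h₁
  have hb : ContDiff ℝ 1 (advect u₀ u₁ u₁) := contDiff_advect h₀' (h₁.of_le one_le_two) h₁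
  unfold fluxFst
  fun_prop

lemma contDiff_fluxSnd (h₀ : ContDiff ℝ 2 u₀) (h₁ : ContDiff ℝ 2 u₁) :
    ContDiff ℝ 1 (fluxSnd u₀ u₁) := by
  have h₁' : ContDiff ℝ 1 u₁ := h₁.of_le one_le_two
  have hω : ContDiff ℝ 1 (vort u₀ u₁) := contDiff_vort h₀ h₁
  have ha : ContDiff ℝ 1 (advect u₀ u₁ u₀) := contDiff_advect (h₀.of_le one_le_two) h₁' h₀
  unfold fluxSnd
  fun_prop

lemma per2_advect (hu₀ : Per2 u₀) (hu₁ : Per2 u₁) (hf : Per2 f) : Per2 (advect u₀ u₁ f) := by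
  intro x i
  simp only [advect, hu₀ x i, hu₁ x i, per2_pd hf 0 x i, per2_pd hf 1 x i]

lemma per2_vort (hu₀ : Per2 u₀) (hu₁ : Per2 u₁) : Per2 (vort u₀ u₁) := by
  intro x i
  simp only [vort, per2_pd hu₀ 1 x i, per2_pd hu₁ 0 x i]

lemma per2_fluxFst (hu₀ : Per2 u₀) (hu₁ : Per2 u₁) : Per2 (fluxFst u₀ u₁) := by
  intro x i
  simp only [fluxFst, hu₀ x i, per2_vort hu₀ hu₁ x i, per2_advect hu₀ hu₁ hu₁ x i]

lemma per2_fluxSnd (hu₀ : Per2 u₀) (hu₁ : Per2 u₁) : Per2 (fluxSnd u₀ u₁) := by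
  intro x i
  simp only [fluxSnd, hu₁ x i, per2_vort hu₀ hu₁ x i, per2_advect hu₀ hu₁ hu₀ x i]

lemma pd_pd_add_pd_pd_eq_zero (h₀ : ContDiff ℝ 2 u₀) (h₁ : ContDiff ℝ 2 u₁)
    (hdiv : ∀ y, pd 0 u₀ y + pd 1 u₁ y = 0) (i : Fin 2) (x : E2) :
    pd i (pd 0 u₀) x + pd i (pd 1 u₁) x = 0 := by
  rw [← pd_add (differentiable_pd h₀ 0 x) (differentiable_pd h₁ 1 x), funext hdiv, pd_const]

lemma lap_fst_eq_neg_pd_vort (h₀ : ContDiff ℝ 2 u₀) (h₁ : ContDiff ℝ 2 u₁)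
    (hdiv : ∀ y, pd 0 u₀ y + pd 1 u₁ y = 0) (x : E2) :
    lap u₀ x = -pd 1 (vort u₀ u₁) x := by
  unfold vort
  rw [pd_sub (differentiable_pd h₁ 0 x) (differentiable_pd h₀ 1 x), pd_comm h₁ 1 0]
  simp only [lap, Fin.sum_univ_two]
  linarith [pd_pd_add_pd_pd_eq_zero h₀ h₁ hdiv 0 x]

lemma lap_snd_eq_pd_vort (h₀ : ContDiff ℝ 2 u₀) (h₁ : ContDiff ℝ 2 u₁)
    (hdiv : ∀ y, pd 0 u₀ y + pd 1 u₁ y = 0) (x : E2) :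
    lap u₁ x = pd 0 (vort u₀ u₁) x := by
  unfold vort
  rw [pd_sub (differentiable_pd h₁ 0 x) (differentiable_pd h₀ 1 x), pd_comm h₀ 0 1]
  simp only [lap, Fin.sum_univ_two]
  linarith [pd_pd_add_pd_pd_eq_zero h₀ h₁ hdiv 1 x]

lemma pd_advect_sub_pd_advect (h₀ : ContDiff ℝ 2 u₀) (h₁ : ContDiff ℝ 2 u₁)
    (hdiv : ∀ y, pd 0 u₀ y + pd 1 u₁ y = 0) (x : E2) :
    pd 0 (advect u₀ u₁ u₁) x - pd 1 (advect u₀ u₁ u₀) x = advect u₀ u₁ (vort u₀ u₁) x := by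
  have hd₀ : Differentiable ℝ u₀ := h₀.differentiable two_ne_zero
  have hd₁ : Differentiable ℝ u₁ := h₁.differentiable two_ne_zero
  have hd₀₀ := differentiable_pd h₀ 0
  have hd₀₁ := differentiable_pd h₀ 1
  have hd₁₀ := differentiable_pd h₁ 0
  have hd₁₁ := differentiable_pd h₁ 1
  unfold advect vort
  simp (disch := fun_prop) only [pd_add, pd_sub, pd_mul]
  rw [pd_comm h₀ 1 0, pd_comm h₁ 1 0]
  linear_combination (pd 0 u₁ x - pd 1 u₀ x) * hdiv x

lemma pd_mul_sq_add_pd_mul_sq (hu₀ : Differentiable ℝ u₀) (hu₁ : Differentiable ℝ u₁)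
    (hf : Differentiable ℝ f) (hdiv : ∀ y, pd 0 u₀ y + pd 1 u₁ y = 0) (x : E2) :
    pd 0 (fun y => u₀ y * f y ^ 2 / 2) x + pd 1 (fun y => u₁ y * f y ^ 2 / 2) x =
      f x * advect u₀ u₁ f x := by
  simp (disch := fun_prop) only [pd_div_const, pd_mul, pd_pow]
  unfold advect
  linear_combination f x ^ 2 / 2 * hdiv x

lemma advect_mul_lap_add_advect_mul_lap (h₀ : ContDiff ℝ 2 u₀) (h₁ : ContDiff ℝ 2 u₁)
    (hdiv : ∀ y, pd 0 u₀ y + pd 1 u₁ y = 0) (x : E2) :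
    advect u₀ u₁ u₀ x * lap u₀ x + advect u₀ u₁ u₁ x * lap u₁ x =
      pd 0 (fluxFst u₀ u₁) x + pd 1 (fluxSnd u₀ u₁) x := by
  have h₀' : ContDiff ℝ 1 u₀ := h₀.of_le one_le_two
  have h₁' : ContDiff ℝ 1 u₁ := h₁.of_le one_le_two
  have hd₀ : Differentiable ℝ u₀ := h₀'.differentiable one_ne_zero
  have hd₁ : Differentiable ℝ u₁ := h₁'.differentiable one_ne_zero
  have hω : Differentiable ℝ (vort u₀ u₁) := (contDiff_vort h₀ h₁).differentiable one_ne_zero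
  have ha : Differentiable ℝ (advect u₀ u₁ u₀) :=
    (contDiff_advect h₀' h₁' h₀).differentiable one_ne_zero
  have hb : Differentiable ℝ (advect u₀ u₁ u₁) :=
    (contDiff_advect h₀' h₁' h₁).differentiable one_ne_zero
  unfold fluxFst fluxSnd
  simp (disch := fun_prop) only [pd_sub, pd_neg, pd_mul]
  rw [lap_fst_eq_neg_pd_vort h₀ h₁ hdiv, lap_snd_eq_pd_vort h₀ h₁ hdiv]
  linear_combination pd_mul_sq_add_pd_mul_sq hd₀ hd₁ hω hdiv x -
    vort u₀ u₁ x * pd_advect_sub_pd_advect h₀ h₁ hdiv x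

end Advection

/-- For a smooth, `2π`-periodic, divergence-free `u : ℝ² → ℝ²`,
`∫_Q ((u·∇)u)·Δu dx = 0`, i.e. `(B(u,u), Au)_{L²} = 0`. -/
theorem stmt3 (u : E2 → Fin 2 → ℝ) (hu : ContDiff ℝ (⊤ : ℕ∞) u) (hper : Per2 u)
    (hdiv : ∀ x, ∑ j : Fin 2, pd j (fun y => u y j) x = 0) :
    ∫ x in Q2, ∑ i : Fin 2,
        (∑ j : Fin 2, u x j * pd j (fun y => u y i) x) * lap (fun y => u y i) x = 0 := by
  set u₀ : E2 → ℝ := fun y => u y 0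
  set u₁ : E2 → ℝ := fun y => u y 1
  have h₀ : ContDiff ℝ 2 u₀ := (contDiff_pi.1 hu 0).of_le (by norm_cast)
  have h₁ : ContDiff ℝ 2 u₁ := (contDiff_pi.1 hu 1).of_le (by norm_cast)
  have hp₀ : Per2 u₀ := fun x i => congrFun (hper x i) 0
  have hp₁ : Per2 u₁ := fun x i => congrFun (hper x i) 1
  have hdiv' : ∀ y, pd 0 u₀ y + pd 1 u₁ y = 0 := by simpa [Fin.sum_univ_two] using hdiv
  calc _ = ∫ x in Q2, (pd 0 (fluxFst u₀ u₁) x + pd 1 (fluxSnd u₀ u₁) x) := by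
        congr with x
        simpa [Fin.sum_univ_two, advect] using advect_mul_lap_add_advect_mul_lap h₀ h₁ hdiv' x
    _ = 0 := integral_Q2_pd_add_pd_eq_zero (contDiff_fluxFst h₀ h₁) (contDiff_fluxSnd h₀ h₁)
        (per2_fluxFst hp₀ hp₁) (per2_fluxSnd hp₀ hp₁)
end
end

section
/- Let φ : ℝ² → ℝ be a Schwartz function. Then for every x ∈ ℝ² the pointwise identity 2 φ(x) Λφ(x) = Λ(φ²)(x) + D[φ](x) holds, where D[φ](x) = c ∫_{ℝ²} (φ(x) − φ(y))² / |x−y|³ dy is a convergent integral (with the same constant c as in the definition of Λ); in particular D[φ](x) ≥ 0, so φ(x)Λφ(x) ≥ ½ Λ(φ²)(x). -/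
/-! At every truncation level `δ > 0`, integrating the identity
`a² - b² = 2a(a - b) - (a - b)²` against `|x - y|⁻³` over `|x - y| > δ` gives the truncated
form of `Λ(φ²) = 2φΛφ - D[φ]`, and one lets `δ → 0`. This only needs `D[φ](x)` to converge
absolutely: for `φ` `L`-Lipschitz and bounded by `M`, `(φ(x) - φ(y))² ≤ min(L²|x - y|², 4M²)`,
so its integrand is `O(|x - y|⁻¹)` near `x` and `O(|x - y|⁻³)` at infinity, both integrable in
the plane. -/

open MeasureTheory Filter Topology Real Set
open scoped RealInnerProductSpace
noncomputable section

/-- `v` is the value at `x` of the half-Laplacian `Λ = (−Δ)^{1/2}` of `g`, defined as the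
principal value `Λg(x) = c lim_{δ→0⁺} ∫_{|x−y|>δ} (g(x) − g(y))/|x−y|³ dy`. -/
def IsHalfLapAt (c : ℝ) (g : E2 → ℝ) (x : E2) (v : ℝ) : Prop :=
  Tendsto (fun δ : ℝ => c * ∫ y in {y : E2 | δ < dist x y}, (g x - g y) / dist x y ^ 3)
    (nhdsWithin 0 (Set.Ioi 0)) (𝓝 v)

section Kernel

variable {E F : Type*} [NormedAddCommGroup E] [NormedSpace ℝ E] [FiniteDimensional ℝ E]
  [MeasurableSpace E] [BorelSpace E] [Nontrivial E] {μ : Measure E} [μ.IsAddHaarMeasure]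
  [NormedAddCommGroup F]

open Module Metric

lemma integrableOn_compl_ball_of_norm_le_rpow {f : E → F} {C q r : ℝ} (hr : 0 < r)
    (hq : finrank ℝ E < q) (h_decay : ∀ x, r ≤ ‖x‖ → ‖f x‖ ≤ C * ‖x‖ ^ (-q))
    (h_meas : AEStronglyMeasurable f μ) : IntegrableOn f (ball 0 r)ᶜ μ := by
  set g : ℝ → ℝ := (Ici r).indicator fun t => C * t ^ (-q)
  have h_rpow : IntegrableOn (fun t : ℝ => C * t ^ ((finrank ℝ E : ℝ) - 1 - q)) (Ici r) :=
    ((integrableOn_Ici_iff_integrableOn_Ioi (by finiteness)).2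
      (integrableOn_Ioi_rpow_of_lt (by linarith) hr)).const_mul C
  have hg : Integrable (fun x : E => g ‖x‖) μ := by
    rw [integrable_fun_norm_addHaar μ]
    refine ((integrable_indicator_iff measurableSet_Ici).2 h_rpow).integrableOn.congr_fun
      (fun t (ht : 0 < t) => ?_) measurableSet_Ioi
    by_cases htr : t ∈ Ici r
    · simp only [g, indicator_of_mem htr, smul_eq_mul]
      rw [← Real.rpow_natCast, Nat.cast_sub (finrank_pos (R := ℝ) (M := E)), Nat.cast_one,
        sub_eq_add_neg _ q, Real.rpow_add ht]
      ring
    · simp [g, htr]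
  rw [← integrable_indicator_iff measurableSet_ball.compl]
  refine hg.mono' (h_meas.indicator measurableSet_ball.compl) (.of_forall fun x => ?_)
  by_cases hx : r ≤ ‖x‖
  · have hx' : x ∈ (ball (0 : E) r)ᶜ := by simpa using hx
    simpa [g, indicator_of_mem hx', hx] using h_decay x hx
  · simp [g, hx]

lemma integrable_of_norm_le_rpow_dist {f : E → F} {x₀ : E} {a b p q r : ℝ} (hr : 0 < r)
    (hp : p < finrank ℝ E) (hq : finrank ℝ E < q)
    (h_near : ∀ x, dist x₀ x < r → ‖f x‖ ≤ a * dist x₀ x ^ (-p))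
    (h_far : ∀ x, r ≤ dist x₀ x → ‖f x‖ ≤ b * dist x₀ x ^ (-q))
    (h_meas : AEStronglyMeasurable f μ) : Integrable f μ := by
  have hshift := measurePreserving_add_right μ x₀
  have hdist : ∀ z, dist x₀ (z + x₀) = ‖z‖ := fun z => by
    rw [dist_comm, dist_eq_norm, add_sub_cancel_right]
  have h_meas' : AEStronglyMeasurable (fun z => f (z + x₀)) μ :=
    h_meas.comp_measurePreserving hshift
  have h_ball : IntegrableOn (fun z => f (z + x₀)) (ball 0 r) μ := by
    refine integrableOn_ball_of_norm_le_rpow (C := a) finrank_pos hp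
      (ae_restrict_of_forall_mem measurableSet_ball fun z hz => ?_) h_meas'
    rw [← hdist]
    exact h_near _ (by rwa [hdist, ← mem_ball_zero_iff])
  have h_compl : IntegrableOn (fun z => f (z + x₀)) (ball 0 r)ᶜ μ :=
    integrableOn_compl_ball_of_norm_le_rpow hr hq
      (fun z hz => hdist z ▸ h_far _ (hdist z ▸ hz)) h_meas'
  have h := integrableOn_union.2 ⟨h_ball, h_compl⟩
  rw [union_compl_self, integrableOn_univ] at h
  simpa using h.comp_sub_right x₀

variable {g : E → ℝ} {M : ℝ} {n : ℕ}

lemma integrable_sq_sub_div_dist_pow {K : NNReal} (hg : LipschitzWith K g)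
    (hM : ∀ y, |g y| ≤ M)
    (hn₁ : finrank ℝ E < n) (hn₂ : n < finrank ℝ E + 2) (x : E) :
    Integrable (fun y => (g x - g y) ^ 2 / dist x y ^ n) μ := by
  have hn₂' : (n : ℝ) < finrank ℝ E + 2 := by exact_mod_cast hn₂
  have hgm := hg.continuous.measurable
  refine integrable_of_norm_le_rpow_dist (x₀ := x) (a := K ^ 2) (b := (2 * M) ^ 2)
    (p := n - 2) (q := n) one_pos (by linarith) (by exact_mod_cast hn₁) (fun y _ => ?_)
    (fun y hy => ?_) (Measurable.aestronglyMeasurable (by fun_prop))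
  · rcases (dist_nonneg (x := x) (y := y)).eq_or_lt with h0 | hpos
    · obtain rfl := dist_eq_zero.1 h0.symm
      rw [sub_self]
      rw [zero_pow two_ne_zero, zero_div, norm_zero]
      positivity
    · have hlip : (g x - g y) ^ 2 ≤ (K * dist x y) ^ 2 := by
        rw [← sq_abs]
        exact pow_le_pow_left₀ (abs_nonneg _)
          (by simpa [Real.dist_eq] using hg.dist_le_mul x y) 2
      rw [Real.norm_eq_abs, abs_of_nonneg (by positivity), Real.rpow_neg hpos.le,
        Real.rpow_sub hpos, Real.rpow_natCast, Real.rpow_two]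
      calc (g x - g y) ^ 2 / dist x y ^ n ≤ (K * dist x y) ^ 2 / dist x y ^ n := by gcongr
        _ = _ := by field_simp
  · have hbdd : (g x - g y) ^ 2 ≤ (2 * M) ^ 2 := by
      rw [← sq_abs]
      exact pow_le_pow_left₀ (abs_nonneg _) ((abs_sub _ _).trans (by linarith [hM x, hM y])) 2
    rw [Real.norm_eq_abs, abs_of_nonneg (by positivity), Real.rpow_neg (by positivity),
      Real.rpow_natCast, ← div_eq_mul_inv]
    gcongr

lemma integrableOn_sub_div_dist_pow {δ : ℝ} (hg : Measurable g) (hM : ∀ y, |g y| ≤ M)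
    (hn : finrank ℝ E < n) (hδ : 0 < δ) (x : E) :
    IntegrableOn (fun y => (g x - g y) / dist x y ^ n) {y | δ < dist x y} μ := by
  have hs : MeasurableSet {y | δ < dist x y} :=
    (isOpen_lt continuous_const (continuous_const.dist continuous_id)).measurableSet
  have hM0 : 0 ≤ M := (abs_nonneg _).trans (hM x)
  rw [← integrable_indicator_iff hs]
  refine integrable_of_norm_le_rpow_dist (x₀ := x) (a := 0) (b := 2 * M) (p := 0) (q := n) hδ
    (by exact_mod_cast finrank_pos) (by exact_mod_cast hn) (fun y hy => ?_) (fun y hy => ?_)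
    ((Measurable.aestronglyMeasurable (by fun_prop)).indicator hs)
  · simp [indicator_of_notMem (show y ∉ {y | δ < dist x y} from hy.not_gt)]
  · by_cases hy' : y ∈ {y | δ < dist x y}
    · have hpos : 0 < dist x y := hδ.trans hy'
      rw [indicator_of_mem hy', Real.norm_eq_abs, abs_div, abs_of_pos (pow_pos hpos n),
        Real.rpow_neg hpos.le, Real.rpow_natCast, ← div_eq_mul_inv]
      gcongr
      exact (abs_sub (g x) (g y)).trans (by linarith [hM x, hM y])
    · rw [indicator_of_notMem hy', norm_zero]
      positivity

end Kernel

lemma tendsto_setIntegral_dist_gt {X G : Type*} [MetricSpace X] [MeasurableSpace X]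
    [OpensMeasurableSpace X] [NormedAddCommGroup G] [NormedSpace ℝ G] {μ : Measure X}
    [NullSingletonClass μ]
    {f : X → G} (hf : Integrable f μ) (x : X) :
    Tendsto (fun δ : ℝ => ∫ y in {y | δ < dist x y}, f y ∂μ) (𝓝 0) (𝓝 (∫ y, f y ∂μ)) := by
  have hs : ∀ δ : ℝ, MeasurableSet {y | δ < dist x y} := fun δ =>
    (isOpen_lt continuous_const (continuous_const.dist continuous_id)).measurableSet
  simp_rw [← integral_indicator (hs _)]
  refine tendsto_integral_filter_of_dominated_convergence (fun y => ‖f y‖)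
    (.of_forall fun δ => hf.aestronglyMeasurable.indicator (hs δ))
    (.of_forall fun δ => .of_forall fun y => norm_indicator_le_norm_self _ _) hf.norm ?_
  filter_upwards [compl_mem_ae_iff.2 (measure_singleton x)] with y (hy : y ≠ x)
  refine tendsto_const_nhds.congr' ?_
  filter_upwards [eventually_lt_nhds (dist_pos.2 hy.symm)] with δ hδ
  exact (indicator_of_mem (show y ∈ {y | δ < dist x y} from hδ) f).symm

lemma IsHalfLapAt.two_mul_mul_eq_add {c M : ℝ} {g : E2 → ℝ} {K : NNReal}
    (hg : LipschitzWith K g) (hM : ∀ y, |g y| ≤ M) {x : E2} {v w : ℝ}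
    (hv : IsHalfLapAt c g x v) (hw : IsHalfLapAt c (fun y => g y ^ 2) x w) :
    2 * g x * v = w + c * ∫ y, (g x - g y) ^ 2 / dist x y ^ 3 := by
  have hdim : Module.finrank ℝ E2 = 2 := finrank_euclideanSpace_fin
  have hD := integrable_sq_sub_div_dist_pow (μ := volume) hg hM (n := 3) (by omega) (by omega) x
  have htrunc : ∀ δ > 0,
      c * ∫ y in {y | δ < dist x y}, (g x ^ 2 - g y ^ 2) / dist x y ^ 3 =
        2 * g x * (c * ∫ y in {y | δ < dist x y}, (g x - g y) / dist x y ^ 3) -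
          c * ∫ y in {y | δ < dist x y}, (g x - g y) ^ 2 / dist x y ^ 3 := by
    intro δ hδ
    have hsplit : (fun y => (g x ^ 2 - g y ^ 2) / dist x y ^ 3) =
        fun y => 2 * g x * ((g x - g y) / dist x y ^ 3) - (g x - g y) ^ 2 / dist x y ^ 3 := by
      funext y
      ring
    have h1 := (integrableOn_sub_div_dist_pow (μ := volume) hg.continuous.measurable hM
      (n := 3) (by omega) hδ x).const_mul (2 * g x)
    rw [hsplit, integral_sub h1 hD.integrableOn, integral_const_mul]
    ring
  have hlim := (hv.const_mul (2 * g x)).sub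
    (((tendsto_setIntegral_dist_gt hD x).mono_left nhdsWithin_le_nhds).const_mul c)
  have hw' := tendsto_nhds_unique hw
    (hlim.congr' (eventually_nhdsWithin_of_forall fun δ hδ => (htrunc δ hδ).symm))
  linarith

lemma SchwartzMap.exists_lipschitzWith {E F : Type*} [NormedAddCommGroup E] [NormedSpace ℝ E]
    [NormedAddCommGroup F] [NormedSpace ℝ F] (φ : SchwartzMap E F) : ∃ K, LipschitzWith K φ :=
  ⟨(SchwartzMap.seminorm ℝ 0 1 φ).toNNReal, lipschitzWith_of_nnnorm_fderiv_le φ.differentiable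
    fun x => by
      rw [← NNReal.coe_le_coe, coe_nnnorm, Real.coe_toNNReal _ (apply_nonneg _ _),
        ← norm_iteratedFDeriv_one]
      exact φ.norm_iteratedFDeriv_le_seminorm ℝ 1 x⟩

/-- The pointwise Córdoba–Córdoba identity: for Schwartz `φ`,
`2φ(x)Λφ(x) = Λ(φ²)(x) + D[φ](x)` with `D[φ](x) = c∫ (φ(x)−φ(y))²/|x−y|³ dy` a
convergent integral; in particular `D[φ](x) ≥ 0`, so `φ(x)Λφ(x) ≥ ½Λ(φ²)(x)`. -/
theorem stmt7 (c : ℝ) (hc : 0 < c) (φ : SchwartzMap E2 ℝ) (Λφ Λφsq : E2 → ℝ)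
    (hΛφ : ∀ x, IsHalfLapAt c (⇑φ) x (Λφ x))
    (hΛφsq : ∀ x, IsHalfLapAt c (fun y => (φ y)^2) x (Λφsq x)) (x : E2) :
    Integrable (fun y : E2 => (φ x - φ y)^2 / dist x y ^ 3) volume ∧
    2 * φ x * Λφ x = Λφsq x + c * ∫ y : E2, (φ x - φ y)^2 / dist x y ^ 3 ∧
    0 ≤ c * ∫ y : E2, (φ x - φ y)^2 / dist x y ^ 3 ∧
    (1/2) * Λφsq x ≤ φ x * Λφ x := by
  obtain ⟨K, hK⟩ := φ.exists_lipschitzWith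
  have hM : ∀ y, |φ y| ≤ SchwartzMap.seminorm ℝ 0 0 φ := φ.norm_le_seminorm ℝ
  have hdim : Module.finrank ℝ E2 = 2 := finrank_euclideanSpace_fin
  have hid := (hΛφ x).two_mul_mul_eq_add hK hM (hΛφsq x)
  have hD : 0 ≤ c * ∫ y : E2, (φ x - φ y)^2 / dist x y ^ 3 :=
    mul_nonneg hc.le (integral_nonneg fun y => by positivity)
  exact ⟨integrable_sq_sub_div_dist_pow hK hM (by omega) (by omega) x, hid, hD, by linarith⟩
end
end

section
/- Let φ : ℝ² → ℝ be a Schwartz function and let p ≥ 2 be an even integer. Then ∫_{ℝ²} φ(x)^{p−1} Λφ(x) dx ≥ 0. The same conclusion holds for every integer p ≥ 2 provided φ is nonnegative. -/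
open MeasureTheory Filter Topology Real Set
open scoped RealInnerProductSpace
noncomputable section

/-!
Write `Λ_δ φ(x) = ∫ (φ(x) − φ(y)) K_δ(x − y) dy` with `K_δ(z) = |z|⁻³ 1_{|z|>δ}`, so that
`Λφ = c lim_{δ→0⁺} Λ_δ φ`. Swapping `x` and `y` gives
`∫ g Λ_δφ = ½ ∬ (g(x) − g(y))(φ(x) − φ(y)) K_δ(x − y) ≥ 0` whenever `g = φ^{p−1}` is a
nondecreasing function of `φ`, which is the case for odd `p − 1` or for `φ ≥ 0`.
Averaging `y = x ± z` gives `Λ_δφ(x) = ½ ∫ (2φ(x) − φ(x + z) − φ(x − z)) K_δ(z) dz`, which the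
second-order Taylor bound near `z = 0` and the bound on `φ` far away dominate by the integrable
`min (C|z|⁻¹) (2B|z|⁻³)`, uniformly in `δ` and `x`. Dominated convergence lets `δ → 0⁺`.
-/

section Taylor

variable {E F : Type*} [NormedAddCommGroup E] [NormedSpace ℝ E]
  [NormedAddCommGroup F] [NormedSpace ℝ F] {f : E → F} {C : ℝ}

lemma norm_fderiv_sub_le_of_norm_iteratedFDeriv_two_le (hf : ContDiff ℝ 2 f)
    (hC : ∀ u, ‖iteratedFDeriv ℝ 2 f u‖ ≤ C) (u v : E) :
    ‖fderiv ℝ f u - fderiv ℝ f v‖ ≤ C * ‖u - v‖ := by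
  have hDf : Differentiable ℝ (fderiv ℝ f) :=
    (hf.fderiv_right (m := 1) (by norm_num)).differentiable one_ne_zero
  have hD2f : ∀ w, ‖fderiv ℝ (fderiv ℝ f) w‖ ≤ C := fun w => by
    calc ‖fderiv ℝ (fderiv ℝ f) w‖ = ‖iteratedFDeriv ℝ 0 (fderiv ℝ (fderiv ℝ f)) w‖ :=
          by rw [norm_iteratedFDeriv_zero]
      _ = ‖iteratedFDeriv ℝ 2 f w‖ := by
          rw [norm_iteratedFDeriv_fderiv, norm_iteratedFDeriv_fderiv]
      _ ≤ C := hC w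
  exact convex_univ.norm_image_sub_le_of_norm_fderiv_le (fun w _ => hDf w)
    (fun w _ => hD2f w) (mem_univ v) (mem_univ u)

lemma norm_sub_sub_fderiv_le (hf : ContDiff ℝ 2 f) (hC : ∀ u, ‖iteratedFDeriv ℝ 2 f u‖ ≤ C)
    (x h : E) : ‖f (x + h) - f x - fderiv ℝ f x h‖ ≤ C * ‖h‖ ^ 2 := by
  have hC0 : 0 ≤ C := (norm_nonneg _).trans (hC x)
  have key := (convex_closedBall x ‖h‖).norm_image_sub_le_of_norm_fderiv_le'
    (f := f) (φ := fderiv ℝ f x) (C := C * ‖h‖)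
    (fun u _ => (hf.differentiable (by norm_num)).differentiableAt)
    (fun u hu => (norm_fderiv_sub_le_of_norm_iteratedFDeriv_two_le hf hC u x).trans
      (mul_le_mul_of_nonneg_left (mem_closedBall_iff_norm.mp hu) hC0))
    (Metric.mem_closedBall_self (norm_nonneg h)) (y := x + h) (by simp)
  simpa [sq, mul_assoc] using key

/-- The first-order terms of the two Taylor expansions cancel. -/
lemma norm_second_difference_le (hf : ContDiff ℝ 2 f) (hC : ∀ u, ‖iteratedFDeriv ℝ 2 f u‖ ≤ C)
    (x h : E) : ‖f (x + h) + f (x - h) - (2 : ℝ) • f x‖ ≤ 2 * C * ‖h‖ ^ 2 := by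
  have hplus := norm_sub_sub_fderiv_le hf hC x h
  have hminus := norm_sub_sub_fderiv_le hf hC x (-h)
  rw [← sub_eq_add_neg, map_neg, norm_neg] at hminus
  calc ‖f (x + h) + f (x - h) - (2 : ℝ) • f x‖
      = ‖(f (x + h) - f x - fderiv ℝ f x h) + (f (x - h) - f x - -fderiv ℝ f x h)‖ := by
        congr 1; rw [two_smul]; abel
    _ ≤ C * ‖h‖ ^ 2 + C * ‖h‖ ^ 2 := norm_add_le_of_le hplus hminus
    _ = 2 * C * ‖h‖ ^ 2 := by ring

end Taylor

lemma integrable_radial_iff {f : ℝ → ℝ} :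
    Integrable (fun z : E2 => f ‖z‖) ↔ IntegrableOn (fun r => r * f r) (Ioi 0) := by
  rw [integrable_fun_norm_addHaar volume]
  simp

lemma integrable_min_inv_norm_inv_norm_cube {a b : ℝ} (ha : 0 ≤ a) (hb : 0 ≤ b) :
    Integrable (fun z : E2 => min (a * ‖z‖⁻¹) (b * (‖z‖ ^ 3)⁻¹)) := by
  refine integrable_radial_iff (f := fun r => min (a * r⁻¹) (b * (r ^ 3)⁻¹)) |>.2 ?_
  have hmeas : AEStronglyMeasurable (fun r : ℝ => r * min (a * r⁻¹) (b * (r ^ 3)⁻¹)) :=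
    (by fun_prop : Measurable fun r : ℝ => r * min (a * r⁻¹) (b * (r ^ 3)⁻¹)).aestronglyMeasurable
  rw [← Ioc_union_Ioi_eq_Ioi zero_le_one]
  refine IntegrableOn.union ?_ ?_
  · refine Integrable.mono' (integrableOn_const (C := a) measure_Ioc_lt_top.ne) hmeas.restrict
      ((ae_restrict_iff' measurableSet_Ioc).2 (ae_of_all _ fun r hr => ?_))
    have hr0 : 0 < r := hr.1
    rw [Real.norm_of_nonneg (by positivity)]
    calc r * min (a * r⁻¹) (b * (r ^ 3)⁻¹) ≤ r * (a * r⁻¹) := by gcongr; exact min_le_left _ _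
      _ = a := by field_simp
  · refine Integrable.mono' ((integrableOn_Ioi_rpow_of_lt (by norm_num : (-2 : ℝ) < -1)
      zero_lt_one).const_mul b) hmeas.restrict
      ((ae_restrict_iff' measurableSet_Ioi).2 (ae_of_all _ fun r hr => ?_))
    have hr0 : 0 < r := zero_lt_one.trans hr
    rw [Real.norm_of_nonneg (by positivity), Real.rpow_neg hr0.le, show (2 : ℝ) = (2 : ℕ) by simp,
      Real.rpow_natCast]
    calc r * min (a * r⁻¹) (b * (r ^ 3)⁻¹) ≤ r * (b * (r ^ 3)⁻¹) := by
          gcongr; exact min_le_right _ _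
      _ = b * (r ^ 2)⁻¹ := by field_simp

def tailKernel (δ : ℝ) (z : E2) : ℝ := (Ioi δ).indicator (fun r => (r ^ 3)⁻¹) ‖z‖

lemma tailKernel_nonneg (δ : ℝ) (z : E2) : 0 ≤ tailKernel δ z := by
  simp only [tailKernel, indicator_apply]
  split_ifs <;> positivity

lemma tailKernel_le (δ : ℝ) (z : E2) : tailKernel δ z ≤ (‖z‖ ^ 3)⁻¹ :=
  indicator_apply_le' (fun _ => le_rfl) (fun _ => by positivity)

lemma tailKernel_neg (δ : ℝ) (z : E2) : tailKernel δ (-z) = tailKernel δ z := by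
  simp [tailKernel]

lemma measurable_tailKernel (δ : ℝ) : Measurable (tailKernel δ) :=
  ((measurable_id.pow_const 3).inv.indicator measurableSet_Ioi).comp measurable_norm

lemma integrable_tailKernel {δ : ℝ} (hδ : 0 < δ) : Integrable (tailKernel δ) := by
  refine integrable_radial_iff.2 ?_
  refine (((integrable_indicator_iff measurableSet_Ioi).2
    (integrableOn_Ioi_rpow_of_lt (by norm_num : (-2 : ℝ) < -1) hδ)).integrableOn).congr_fun
    (fun r hr => ?_) measurableSet_Ioi
  have hr0 : 0 < r := hr
  by_cases h : δ < r
  · simp only [indicator_of_mem (mem_Ioi.2 h)]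
    rw [Real.rpow_neg hr0.le, show (2 : ℝ) = (2 : ℕ) by simp, Real.rpow_natCast]
    field_simp
  · simp [indicator_of_notMem (show r ∉ Ioi δ from h)]

/-- `IsHalfLapAt c g x v` says, by definition, that `c * truncHalfLap g δ x → v` as `δ → 0⁺`. -/
def truncHalfLap (g : E2 → ℝ) (δ : ℝ) (x : E2) : ℝ :=
  ∫ y in {y : E2 | δ < dist x y}, (g x - g y) / dist x y ^ 3

section TruncHalfLap

variable {f : E2 → ℝ} {B δ : ℝ}

lemma truncHalfLap_eq_integral_tailKernel (f : E2 → ℝ) (δ : ℝ) (x : E2) :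
    truncHalfLap f δ x = ∫ y, (f x - f y) * tailKernel δ (x - y) := by
  rw [truncHalfLap, ← integral_indicator
    (measurableSet_lt measurable_const (by fun_prop : Measurable (dist x)))]
  congr 1 with y
  by_cases h : δ < dist x y <;> simp [indicator, tailKernel, h, ← dist_eq_norm, div_eq_mul_inv]

lemma integrable_mul_tailKernel {h : E2 → ℝ} (hh : Measurable h) (hB : ∀ z, |h z| ≤ B)
    (hδ : 0 < δ) : Integrable (fun z => h z * tailKernel δ z) :=
  (integrable_tailKernel hδ).bdd_mul hh.aestronglyMeasurable (ae_of_all _ hB)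

lemma abs_sub_le_two_mul_of_abs_le (hB : ∀ x, |f x| ≤ B) (x y : E2) : |f x - f y| ≤ 2 * B :=
  (abs_sub _ _).trans (by linarith [hB x, hB y])

/-- Averaging the substitutions `y = x - z` and `y = x + z` symmetrizes the kernel. -/
lemma two_mul_truncHalfLap (hf : Measurable f) (hB : ∀ x, |f x| ≤ B) (hδ : 0 < δ) (x : E2) :
    2 * truncHalfLap f δ x = ∫ z, (2 * f x - f (x + z) - f (x - z)) * tailKernel δ z := by
  have hminus : truncHalfLap f δ x = ∫ z, (f x - f (x - z)) * tailKernel δ z := by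
    rw [truncHalfLap_eq_integral_tailKernel, ← integral_sub_left_eq_self _ volume x]
    simp only [sub_sub_cancel]
  have hplus : truncHalfLap f δ x = ∫ z, (f x - f (x + z)) * tailKernel δ z := by
    rw [hminus, ← integral_neg_eq_self]
    simp only [tailKernel_neg, sub_neg_eq_add]
  have hint : ∀ w : E2 → E2, Measurable w →
      Integrable (fun z => (f x - f (w z)) * tailKernel δ z) := fun w hw =>
    integrable_mul_tailKernel (measurable_const.sub (hf.comp hw))
      (fun z => abs_sub_le_two_mul_of_abs_le hB _ _) hδ
  rw [two_mul]
  nth_rw 1 [hplus]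
  rw [hminus, ← integral_add (hint (x + ·) (by fun_prop)) (hint (x - ·) (by fun_prop))]
  congr 1 with z
  ring

lemma abs_second_difference_mul_tailKernel_le {C : ℝ} (hf : ContDiff ℝ 2 f)
    (hB : ∀ x, |f x| ≤ B) (hC : ∀ x, ‖iteratedFDeriv ℝ 2 f x‖ ≤ C) (x z : E2) :
    |(2 * f x - f (x + z) - f (x - z)) * tailKernel δ z| ≤
      2 * min (C * ‖z‖⁻¹) (2 * B * (‖z‖ ^ 3)⁻¹) := by
  rcases eq_or_ne z 0 with rfl | hz
  · simp [two_mul]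
  have hr : 0 < ‖z‖ := norm_pos_iff.2 hz
  have hsmall : |2 * f x - f (x + z) - f (x - z)| ≤ 2 * C * ‖z‖ ^ 2 := by
    have := norm_second_difference_le hf hC x z
    rw [Real.norm_eq_abs, smul_eq_mul, ← abs_neg] at this
    convert this using 2
    ring
  have hlarge : |2 * f x - f (x + z) - f (x - z)| ≤ 4 * B :=
    calc _ = |(f x - f (x + z)) + (f x - f (x - z))| := by ring_nf
      _ ≤ _ := abs_add_le _ _
      _ ≤ 4 * B := by
        linarith [abs_sub_le_two_mul_of_abs_le hB x (x + z),
          abs_sub_le_two_mul_of_abs_le hB x (x - z)]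
  rw [abs_mul, abs_of_nonneg (tailKernel_nonneg δ z), mul_min_of_nonneg _ _ zero_le_two]
  refine (mul_le_mul_of_nonneg_left (tailKernel_le δ z) (abs_nonneg _)).trans (le_min ?_ ?_)
  · calc _ ≤ 2 * C * ‖z‖ ^ 2 * (‖z‖ ^ 3)⁻¹ := by gcongr
      _ = 2 * (C * ‖z‖⁻¹) := by field_simp
  · calc _ ≤ 4 * B * (‖z‖ ^ 3)⁻¹ := by gcongr
      _ = 2 * (2 * B * (‖z‖ ^ 3)⁻¹) := by ring

lemma abs_truncHalfLap_le {C : ℝ} (hf : ContDiff ℝ 2 f) (hB : ∀ x, |f x| ≤ B)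
    (hC : ∀ x, ‖iteratedFDeriv ℝ 2 f x‖ ≤ C) (hδ : 0 < δ) (x : E2) :
    |truncHalfLap f δ x| ≤ ∫ z : E2, min (C * ‖z‖⁻¹) (2 * B * (‖z‖ ^ 3)⁻¹) := by
  have hB0 : 0 ≤ B := (abs_nonneg _).trans (hB x)
  have hC0 : 0 ≤ C := (norm_nonneg _).trans (hC x)
  have hint := integrable_min_inv_norm_inv_norm_cube hC0 (by positivity : 0 ≤ 2 * B)
  have htwice : 2 * |truncHalfLap f δ x| ≤ 2 * ∫ z, min (C * ‖z‖⁻¹) (2 * B * (‖z‖ ^ 3)⁻¹) :=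
    calc 2 * |truncHalfLap f δ x|
        = |∫ z, (2 * f x - f (x + z) - f (x - z)) * tailKernel δ z| := by
          rw [← two_mul_truncHalfLap hf.continuous.measurable hB hδ, abs_mul, abs_two]
      _ ≤ ∫ z, |(2 * f x - f (x + z) - f (x - z)) * tailKernel δ z| := abs_integral_le_integral_abs
      _ ≤ ∫ z, 2 * min (C * ‖z‖⁻¹) (2 * B * (‖z‖ ^ 3)⁻¹) :=
          integral_mono_of_nonneg (ae_of_all _ fun z => abs_nonneg _) (hint.const_mul 2)
            (ae_of_all _ (abs_second_difference_mul_tailKernel_le hf hB hC x))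
      _ = 2 * ∫ z, min (C * ‖z‖⁻¹) (2 * B * (‖z‖ ^ 3)⁻¹) := integral_const_mul _ _
  linarith

lemma measurable_sub_mul_tailKernel (hf : Measurable f) (δ : ℝ) :
    Measurable fun p : E2 × E2 => (f p.1 - f p.2) * tailKernel δ (p.1 - p.2) :=
  ((hf.comp measurable_fst).sub (hf.comp measurable_snd)).mul
    ((measurable_tailKernel δ).comp (measurable_fst.sub measurable_snd))

lemma stronglyMeasurable_truncHalfLap (hf : Measurable f) (δ : ℝ) :
    StronglyMeasurable (truncHalfLap f δ) := by
  convert (measurable_sub_mul_tailKernel hf δ).stronglyMeasurable.integral_prod_right'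
    (ν := volume) using 1
  funext x
  exact truncHalfLap_eq_integral_tailKernel f δ x

lemma integrable_mul_tailKernel_sub_prod {g : E2 → ℝ} (hg : Integrable g) (hδ : 0 < δ) :
    Integrable (fun p : E2 × E2 => g p.1 * tailKernel δ (p.1 - p.2)) (volume.prod volume) := by
  have := hg.convolution_integrand (ContinuousLinearMap.mul ℝ ℝ) (integrable_tailKernel hδ)
    (μ := volume) (ν := volume)
  convert this.swap using 1
  funext p
  simp [← tailKernel_neg δ (p.1 - p.2)]

/-- Symmetrizing in `(x, y)` turns the integrand into `(g x - g y)(f x - f y) K(x - y) ≥ 0`. -/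
lemma integral_mul_truncHalfLap_nonneg {g : E2 → ℝ} (hf : Measurable f) (hB : ∀ x, |f x| ≤ B)
    (hg : Integrable g) (hfg : ∀ x y, f x ≤ f y → g x ≤ g y) (hδ : 0 < δ) :
    0 ≤ ∫ x, g x * truncHalfLap f δ x := by
  set W : E2 × E2 → ℝ := fun p => g p.1 * ((f p.1 - f p.2) * tailKernel δ (p.1 - p.2))
  have hW : Integrable W (volume.prod volume) := by
    refine ((integrable_mul_tailKernel_sub_prod hg hδ).norm.const_mul (2 * B)).mono'
      ((hg.aestronglyMeasurable.comp_fst (ν := volume)).mul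
        (measurable_sub_mul_tailKernel hf δ).aestronglyMeasurable)
      (ae_of_all _ fun p => ?_)
    simp only [W, norm_mul, Real.norm_eq_abs, abs_of_nonneg (tailKernel_nonneg _ _)]
    calc |g p.1| * (|f p.1 - f p.2| * tailKernel δ (p.1 - p.2))
        ≤ |g p.1| * (2 * B * tailKernel δ (p.1 - p.2)) :=
          mul_le_mul_of_nonneg_left (mul_le_mul_of_nonneg_right
            (abs_sub_le_two_mul_of_abs_le hB _ _) (tailKernel_nonneg _ _)) (abs_nonneg _)
      _ = 2 * B * (|g p.1| * tailKernel δ (p.1 - p.2)) := by ring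
  have hfubini : ∫ x, g x * truncHalfLap f δ x = ∫ p, W p ∂(volume.prod volume) := by
    rw [integral_prod W hW]
    congr 1 with x
    rw [truncHalfLap_eq_integral_tailKernel, ← integral_const_mul]
  have hsym : ∀ p, 0 ≤ W p + W p.swap := by
    rintro ⟨x, y⟩
    have hsum : W (x, y) + W (x, y).swap = (g x - g y) * (f x - f y) * tailKernel δ (x - y) := by
      simp only [W, Prod.swap_prod_mk]
      rw [← tailKernel_neg δ (y - x), neg_sub]
      ring
    rw [hsum]
    refine mul_nonneg ?_ (tailKernel_nonneg δ _)
    rcases le_total (f x) (f y) with h | h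
    · exact mul_nonneg_of_nonpos_of_nonpos (sub_nonpos.2 (hfg _ _ h)) (sub_nonpos.2 h)
    · exact mul_nonneg (sub_nonneg.2 (hfg _ _ h)) (sub_nonneg.2 h)
  have hWswap : Integrable (fun p => W p.swap) (volume.prod volume) := hW.swap
  have htwice : 2 * ∫ p, W p ∂(volume.prod volume) =
      ∫ p, (W p + W p.swap) ∂(volume.prod volume) := by
    rw [integral_add hW hWswap, integral_prod_swap W]
    ring
  linarith [integral_nonneg (μ := volume.prod volume) (f := fun p => W p + W p.swap) hsym]

lemma tendsto_integral_mul_truncHalfLap {c M : ℝ} {g Λf : E2 → ℝ} (hf : Measurable f)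
    (hM : ∀ δ > 0, ∀ x, |truncHalfLap f δ x| ≤ M) (hg : Integrable g)
    (hΛf : ∀ x, IsHalfLapAt c f x (Λf x)) :
    Tendsto (fun δ => ∫ x, g x * (c * truncHalfLap f δ x)) (𝓝[>] 0)
      (𝓝 (∫ x, g x * Λf x)) := by
  refine tendsto_integral_filter_of_dominated_convergence (fun x => ‖g x‖ * (|c| * M))
    (Eventually.of_forall fun δ => hg.aestronglyMeasurable.mul
      ((stronglyMeasurable_truncHalfLap hf δ).aestronglyMeasurable.const_mul c))
    ?_ (hg.norm.mul_const _) (ae_of_all _ fun x => (hΛf x).const_mul (g x))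
  filter_upwards [self_mem_nhdsWithin] with δ hδ
  refine ae_of_all _ fun x => ?_
  rw [norm_mul, norm_mul, Real.norm_eq_abs c, Real.norm_eq_abs (truncHalfLap f δ x)]
  gcongr
  exact hM δ hδ x

end TruncHalfLap

lemma integrable_pow_of_abs_le {α : Type*} [MeasurableSpace α] {μ : Measure α} {f : α → ℝ}
    {B : ℝ} (hf : Integrable f μ) (hB : ∀ x, |f x| ≤ B) {n : ℕ} (hn : n ≠ 0) :
    Integrable (fun x => f x ^ n) μ := by
  obtain ⟨m, rfl⟩ := Nat.exists_eq_succ_of_ne_zero hn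
  simp only [pow_succ]
  exact hf.bdd_mul (c := B ^ m) (hf.aestronglyMeasurable.pow m)
    (ae_of_all _ fun x => by rw [norm_pow, Real.norm_eq_abs]; gcongr; exact hB x)

/-- For Schwartz `φ` and an integer `p ≥ 2` which is even — or arbitrary provided
`φ ≥ 0` — one has `∫ φ^{p−1} Λφ dx ≥ 0`. -/
theorem stmt8 (c : ℝ) (hc : 0 < c) (φ : SchwartzMap E2 ℝ) (Λφ : E2 → ℝ)
    (hΛφ : ∀ x, IsHalfLapAt c (⇑φ) x (Λφ x))
    (p : ℕ) (hp : 2 ≤ p) (hcase : Even p ∨ ∀ x, 0 ≤ φ x) :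
    0 ≤ ∫ x : E2, (φ x) ^ (p - 1) * Λφ x := by
  have hφ : ContDiff ℝ 2 φ := φ.smooth 2
  have hB : ∀ x, |φ x| ≤ SchwartzMap.seminorm ℝ 0 0 φ := φ.norm_le_seminorm ℝ
  have hC := φ.norm_iteratedFDeriv_le_seminorm ℝ 2
  have hmono : ∀ x y, φ x ≤ φ y → φ x ^ (p - 1) ≤ φ y ^ (p - 1) := by
    rcases hcase with heven | hnonneg
    · exact fun x y => (Nat.Even.sub_odd (by omega) heven odd_one).strictMono_pow.monotone.imp
    · exact fun x y h => pow_le_pow_left₀ (hnonneg x) h _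
  have hpow : Integrable fun x => φ x ^ (p - 1) :=
    integrable_pow_of_abs_le φ.integrable hB (by omega)
  refine ge_of_tendsto (tendsto_integral_mul_truncHalfLap hφ.continuous.measurable
    (fun δ hδ => abs_truncHalfLap_le hφ hB hC hδ) hpow hΛφ)
    (eventually_nhdsWithin_of_forall fun δ hδ => ?_)
  simp only [mul_left_comm _ c, integral_const_mul]
  exact mul_nonneg hc.le
    (integral_mul_truncHalfLap_nonneg hφ.continuous.measurable hB hpow hmono hδ)
end
end

section
/- Let L > 0, let a : ℝ² → ℝ be a smooth function supported in the ball B(0,L), and let b : ℝ² → ℝ be a Schwartz function. Then there is a constant C > 0 (depending only on the normalization constant of Λ) such that for every x ∈ ℝ² with |x| ≥ 2L, the pointwise commutator bound |Λ(ab)(x) − a(x)Λb(x)| ≤ C |x|^{−3} ‖a‖_{L²(ℝ²)} ‖b‖_{L²(ℝ²)} holds. -/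
open MeasureTheory Filter Topology Real Set
open scoped RealInnerProductSpace
noncomputable section

/-!
Since `a` vanishes off `B(0, L)` and `|x| ≥ 2L`, both `a(x) = 0` and `ab` vanishes on
`B(x, |x|/2)`. So the commutator is just `Λ(ab)(x)`, whose principal value is the absolutely
convergent integral `-c ∫ a b / |x - y|³` with kernel at most `8 |x|⁻³` on the support of `ab`;
Cauchy–Schwarz then bounds `∫ |a b|` by `‖a‖_{L²} ‖b‖_{L²}`.
-/

open Metric

theorem isHalfLapAt_of_eqOn_zero_ball {c r : ℝ} {g : E2 → ℝ} {x : E2} (hr : 0 < r)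
    (hg : EqOn g 0 (ball x r)) :
    IsHalfLapAt c g x (-(c * ∫ y, g y / dist x y ^ 3)) := by
  have hgx : g x = 0 := hg (mem_ball_self hr)
  refine tendsto_const_nhds.congr' ?_
  filter_upwards [Ioo_mem_nhdsGT hr] with δ hδ
  have hout : ∀ y ∉ {y | δ < dist x y}, g y / dist x y ^ 3 = 0 := fun y hy => by
    rw [hg (mem_ball'.2 ((not_lt.1 hy).trans_lt hδ.2)), Pi.zero_apply, zero_div]
  simp only [hgx, zero_sub, neg_div, integral_neg, mul_neg,
    setIntegral_eq_integral_of_forall_compl_eq_zero hout]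

theorem abs_integral_div_dist_pow_le {α : Type*} [PseudoMetricSpace α] [MeasurableSpace α]
    {μ : Measure α} {g : α → ℝ} {x : α} {r : ℝ} (hr : 0 < r) (n : ℕ) (hg : Integrable g μ)
    (hg0 : EqOn g 0 (ball x r)) :
    |∫ y, g y / dist x y ^ n ∂μ| ≤ (r ^ n)⁻¹ * ∫ y, |g y| ∂μ := by
  rw [← integral_const_mul, ← Real.norm_eq_abs]
  refine norm_integral_le_of_norm_le (hg.abs.const_mul _) (Eventually.of_forall fun y => ?_)
  by_cases hy : dist x y < r
  · simp [hg0 (mem_ball'.2 hy)]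
  · have hry : r ≤ dist x y := not_lt.1 hy
    rw [Real.norm_eq_abs, abs_div, abs_of_nonneg (pow_nonneg dist_nonneg n), div_eq_inv_mul]
    gcongr

theorem integral_abs_mul_le_sqrt_mul_sqrt {α : Type*} [MeasurableSpace α] {μ : Measure α}
    {f g : α → ℝ} (hf : MemLp f 2 μ) (hg : MemLp g 2 μ) :
    ∫ y, |f y * g y| ∂μ ≤ √(∫ y, f y ^ 2 ∂μ) * √(∫ y, g y ^ 2 ∂μ) := by
  have hconj : (2 : ℝ).HolderConjugate 2 := Real.holderConjugate_iff.2 ⟨one_lt_two, by norm_num⟩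
  have hholder := integral_mul_norm_le_Lp_mul_Lq hconj (by simpa using hf) (by simpa using hg)
  simp only [Real.norm_eq_abs, Real.rpow_two, sq_abs, ← abs_mul] at hholder
  simpa only [Real.sqrt_eq_rpow, one_div] using hholder

theorem eqOn_zero_ball_of_support_subset_ball {E β : Type*} [SeminormedAddCommGroup E] [Zero β]
    {a : E → β} {L : ℝ} {x : E} (hsupp : Function.support a ⊆ ball 0 L) (hx : 2 * L ≤ ‖x‖) :
    EqOn a 0 (ball x (‖x‖ / 2)) := fun y hy => by
  by_contra hay
  have hyL : ‖y‖ < L := mem_ball_zero_iff.1 (hsupp hay)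
  have hxy : ‖x‖ - ‖y‖ ≤ dist y x := by
    rw [dist_comm, dist_eq_norm]
    exact norm_sub_norm_le x y
  linarith [mem_ball.1 hy]

/-- Pointwise far-field commutator bound: there is `C > 0` depending only on the
normalization constant `c` of `Λ` such that for smooth `a` supported in `B(0,L)`
and Schwartz `b`, `|Λ(ab)(x) − a(x)Λb(x)| ≤ C |x|⁻³ ‖a‖_{L²} ‖b‖_{L²}` whenever
`|x| ≥ 2L`. -/
theorem stmt10 (c : ℝ) (hc : 0 < c) :
    ∃ C : ℝ, 0 < C ∧
      ∀ (L : ℝ), 0 < L →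
      ∀ (a : E2 → ℝ), ContDiff ℝ (⊤ : ℕ∞) a → (Function.support a ⊆ Metric.ball 0 L) →
      ∀ (b : SchwartzMap E2 ℝ), ∀ (Λab Λb : E2 → ℝ),
        (∀ x, IsHalfLapAt c (fun y => a y * b y) x (Λab x)) →
        (∀ x, IsHalfLapAt c (⇑b) x (Λb x)) →
        ∀ x : E2, 2 * L ≤ ‖x‖ →
          |Λab x - a x * Λb x|
            ≤ C * (‖x‖ ^ 3)⁻¹ * Real.sqrt (∫ y : E2, (a y)^2)
                * Real.sqrt (∫ y : E2, (b y)^2) := by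
  refine ⟨8 * c, by positivity, ?_⟩
  intro L hL a ha hsupp b Λab Λb hΛab _ x hx
  have hr : 0 < ‖x‖ / 2 := by linarith
  have ha0 := eqOn_zero_ball_of_support_subset_ball hsupp hx
  have hax : a x = 0 := ha0 (mem_ball_self hr)
  have hab0 : EqOn (fun y => a y * b y) 0 (ball x (‖x‖ / 2)) := fun y hy => by
    simp [ha0 hy]
  have ha2 : MemLp a 2 := ha.continuous.memLp_of_hasCompactSupport
    (isBounded_ball.subset hsupp).isCompact_closure
  have hb2 : MemLp b 2 := b.memLp 2
  have hΛab_eq := tendsto_nhds_unique (hΛab x) (isHalfLapAt_of_eqOn_zero_ball hr hab0)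
  rw [hΛab_eq, hax, zero_mul, sub_zero, abs_neg, abs_mul, abs_of_pos hc]
  calc c * |∫ y, a y * b y / dist x y ^ 3|
      ≤ c * (((‖x‖ / 2) ^ 3)⁻¹ * ∫ y, |a y * b y|) := by
        gcongr
        exact abs_integral_div_dist_pow_le hr 3 (ha2.integrable_mul hb2) hab0
    _ ≤ c * (((‖x‖ / 2) ^ 3)⁻¹ * (√(∫ y, a y ^ 2) * √(∫ y, b y ^ 2))) := by
        gcongr
        exact integral_abs_mul_le_sqrt_mul_sqrt ha2 hb2
    _ = 8 * c * (‖x‖ ^ 3)⁻¹ * √(∫ y, a y ^ 2) * √(∫ y, b y ^ 2) := by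
        rw [div_pow, inv_div]
        ring
end
end

section
/- Let k₁, k₂ be positive real numbers and α₁, β₁, α₂, β₂ ∈ ℝ. Define ψ : ℝ² → ℝ by ψ(x₁,x₂) = α₁ sin(k₁x₁) + β₁ cos(k₁x₁) + α₂ sin(k₂x₂) + β₂ cos(k₂x₂), set u = ∇^⊥ψ and ω = Δψ, and let g = u·∇ω (the vorticity form of the nonlinearity B(u,u)). Then −Δg = (k₁² + k₂²) g; that is, the force produced by the sum of two one-dimensional Laplacian eigenfunctions with orthogonal spectral supports is itself an eigenfunction of the (negative) Laplacian with eigenvalue k₁² + k₂², exhibiting a Kolmogorov force f with B(u,u) = f for the steady Euler flow u. -/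
open MeasureTheory Filter Topology Real Set
open scoped RealInnerProductSpace
noncomputable section

/-- The sum of two one-dimensional Laplacian eigenfunctions in orthogonal variables. -/
def psiK (k₁ k₂ α₁ β₁ α₂ β₂ : ℝ) : E2 → ℝ := fun x =>
  α₁ * Real.sin (k₁ * x 0) + β₁ * Real.cos (k₁ * x 0)
    + α₂ * Real.sin (k₂ * x 1) + β₂ * Real.cos (k₂ * x 1)

/-!
Write `ψ(y) = F(y₀) + G(y₁)` with `F'' = -a F` and `G'' = -b G` (here `a = k₁²`, `b = k₂²`).
Then `ω = -a F(y₀) - b G(y₁)` and `u = (-G'(y₁), F'(y₀))`, so the advection term collapses to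
the single product `u·∇ω = (a - b) F'(y₀) G'(y₁)`. Both factors again solve their
one-dimensional Helmholtz equations, so this product is a Laplacian eigenfunction with
eigenvalue `-(a + b)`.
-/

/-- `F'' + a F = 0`. Differentiability of `F'` is part of the definition because `deriv`
is `0` wherever it is undefined. -/
structure SatisfiesHelmholtz (a : ℝ) (F : ℝ → ℝ) : Prop where
  differentiable : Differentiable ℝ F
  differentiable_deriv : Differentiable ℝ (deriv F)
  deriv_deriv : deriv (deriv F) = fun t => -a * F t

namespace SatisfiesHelmholtz

variable {a : ℝ} {F : ℝ → ℝ}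

theorem const_mul (hF : SatisfiesHelmholtz a F) (c : ℝ) :
    SatisfiesHelmholtz a (fun t => c * F t) := by
  have hderiv : deriv (fun t => c * F t) = fun t => c * deriv F t :=
    funext fun t => deriv_const_mul c (hF.differentiable t)
  refine ⟨hF.differentiable.const_mul c, hderiv ▸ hF.differentiable_deriv.const_mul c, ?_⟩
  rw [hderiv]
  funext t
  rw [deriv_const_mul c (hF.differentiable_deriv t), hF.deriv_deriv]
  ring

theorem deriv (hF : SatisfiesHelmholtz a F) : SatisfiesHelmholtz a (_root_.deriv F) := by
  have hderiv : _root_.deriv (fun t => -a * F t) = fun t => -a * _root_.deriv F t :=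
    funext fun t => deriv_const_mul (-a) (hF.differentiable t)
  refine ⟨hF.differentiable_deriv, ?_, ?_⟩
  · rw [hF.deriv_deriv]; exact hF.differentiable.const_mul _
  · rw [hF.deriv_deriv, hderiv]

end SatisfiesHelmholtz

theorem satisfiesHelmholtz_sinusoid (k α β : ℝ) :
    SatisfiesHelmholtz (k ^ 2) (fun t => α * Real.sin (k * t) + β * Real.cos (k * t)) := by
  have hlin (t : ℝ) : HasDerivAt (fun t : ℝ => k * t) k t := by
    simpa using (hasDerivAt_id t).const_mul k
  have hsinusoid (a b t : ℝ) :
      HasDerivAt (fun t => a * Real.sin (k * t) + b * Real.cos (k * t))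
        ((-(k * b)) * Real.sin (k * t) + (k * a) * Real.cos (k * t)) t := by
    have := (((Real.hasDerivAt_sin _).comp t (hlin t)).const_mul a).add
      (((Real.hasDerivAt_cos _).comp t (hlin t)).const_mul b)
    exact this.congr_deriv (by ring)
  have hderiv (a b : ℝ) : deriv (fun t => a * Real.sin (k * t) + b * Real.cos (k * t))
      = fun t => (-(k * b)) * Real.sin (k * t) + (k * a) * Real.cos (k * t) :=
    funext fun t => (hsinusoid a b t).deriv
  refine ⟨fun t => (hsinusoid α β t).differentiableAt, ?_, ?_⟩
  · rw [hderiv]; exact fun t => (hsinusoid _ _ t).differentiableAt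
  · rw [hderiv, hderiv]; funext t; ring

section Separable

variable {F G : ℝ → ℝ}

theorem hasFDerivAt_comp_apply (i : Fin 2) {x : E2} (hF : DifferentiableAt ℝ F (x i)) :
    HasFDerivAt (fun y : E2 => F (y i))
      (deriv F (x i) • (EuclideanSpace.proj i : E2 →L[ℝ] ℝ)) x :=
  hF.hasDerivAt.comp_hasFDerivAt x (EuclideanSpace.proj i : E2 →L[ℝ] ℝ).hasFDerivAt

theorem pd_comp_apply_self (i : Fin 2) (hF : Differentiable ℝ F) :
    pd i (fun y => F (y i)) = fun y => deriv F (y i) := by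
  funext x
  simp [pd, (hasFDerivAt_comp_apply i (hF (x i))).fderiv]

theorem pd_zero_add_sep (hF : Differentiable ℝ F) (hG : Differentiable ℝ G) :
    pd 0 (fun y => F (y 0) + G (y 1)) = fun y => deriv F (y 0) := by
  funext x
  rw [pd, ((hasFDerivAt_comp_apply 0 (hF (x 0))).fun_add
    (hasFDerivAt_comp_apply 1 (hG (x 1)))).fderiv]
  simp

theorem pd_one_add_sep (hF : Differentiable ℝ F) (hG : Differentiable ℝ G) :
    pd 1 (fun y => F (y 0) + G (y 1)) = fun y => deriv G (y 1) := by
  funext x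
  rw [pd, ((hasFDerivAt_comp_apply 0 (hF (x 0))).fun_add
    (hasFDerivAt_comp_apply 1 (hG (x 1)))).fderiv]
  simp

theorem pd_zero_mul_sep (hF : Differentiable ℝ F) (hG : Differentiable ℝ G) :
    pd 0 (fun y => F (y 0) * G (y 1)) = fun y => deriv F (y 0) * G (y 1) := by
  funext x
  rw [pd, ((hasFDerivAt_comp_apply 0 (hF (x 0))).fun_mul
    (hasFDerivAt_comp_apply 1 (hG (x 1)))).fderiv]
  simp [mul_comm]

theorem pd_one_mul_sep (hF : Differentiable ℝ F) (hG : Differentiable ℝ G) :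
    pd 1 (fun y => F (y 0) * G (y 1)) = fun y => F (y 0) * deriv G (y 1) := by
  funext x
  rw [pd, ((hasFDerivAt_comp_apply 0 (hF (x 0))).fun_mul
    (hasFDerivAt_comp_apply 1 (hG (x 1)))).fderiv]
  simp

theorem lap_add_sep (hF : Differentiable ℝ F) (hF' : Differentiable ℝ (deriv F))
    (hG : Differentiable ℝ G) (hG' : Differentiable ℝ (deriv G)) :
    lap (fun y => F (y 0) + G (y 1))
      = fun y => deriv (deriv F) (y 0) + deriv (deriv G) (y 1) := by
  funext x
  simp only [lap, Fin.sum_univ_two, pd_zero_add_sep hF hG, pd_one_add_sep hF hG,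
    pd_comp_apply_self _ hF', pd_comp_apply_self _ hG']

theorem lap_mul_sep (hF : Differentiable ℝ F) (hF' : Differentiable ℝ (deriv F))
    (hG : Differentiable ℝ G) (hG' : Differentiable ℝ (deriv G)) :
    lap (fun y => F (y 0) * G (y 1))
      = fun y => deriv (deriv F) (y 0) * G (y 1) + F (y 0) * deriv (deriv G) (y 1) := by
  funext x
  simp only [lap, Fin.sum_univ_two, pd_zero_mul_sep hF hG, pd_one_mul_sep hF hG,
    pd_zero_mul_sep hF' hG, pd_one_mul_sep hF hG']

end Separable

/-- The force `g = u·∇ω`, with `u = ∇^⊥ψ` and `ω = Δψ`. -/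
def advection (ψ : E2 → ℝ) (y : E2) : ℝ :=
  ∑ i : Fin 2, gradPerp ψ y i * pd i (lap ψ) y

section Helmholtz

variable {a b : ℝ} {F G : ℝ → ℝ}

theorem lap_mul_sep_of_satisfiesHelmholtz (hF : SatisfiesHelmholtz a F)
    (hG : SatisfiesHelmholtz b G) :
    lap (fun y => F (y 0) * G (y 1)) = fun y => -(a + b) * (F (y 0) * G (y 1)) := by
  rw [lap_mul_sep hF.differentiable hF.differentiable_deriv hG.differentiable
    hG.differentiable_deriv, hF.deriv_deriv, hG.deriv_deriv]
  funext y
  ring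

theorem advection_add_sep (hF : SatisfiesHelmholtz a F) (hG : SatisfiesHelmholtz b G) :
    advection (fun y => F (y 0) + G (y 1))
      = fun y => (a - b) * deriv F (y 0) * deriv G (y 1) := by
  have hω : lap (fun y => F (y 0) + G (y 1))
      = fun y => (fun t => -a * F t) (y 0) + (fun t => -b * G t) (y 1) := by
    rw [lap_add_sep hF.differentiable hF.differentiable_deriv hG.differentiable
      hG.differentiable_deriv, hF.deriv_deriv, hG.deriv_deriv]
  funext y
  simp only [advection, Fin.sum_univ_two, gradPerp, Matrix.cons_val_zero, Matrix.cons_val_one,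
    hω, pd_zero_add_sep hF.differentiable hG.differentiable,
    pd_one_add_sep hF.differentiable hG.differentiable,
    pd_zero_add_sep (hF.const_mul (-a)).differentiable (hG.const_mul (-b)).differentiable,
    pd_one_add_sep (hF.const_mul (-a)).differentiable (hG.const_mul (-b)).differentiable,
    deriv_const_mul _ (hF.differentiable _), deriv_const_mul _ (hG.differentiable _)]
  ring

theorem neg_lap_advection_add_sep (hF : SatisfiesHelmholtz a F) (hG : SatisfiesHelmholtz b G)
    (x : E2) :
    -lap (advection (fun y => F (y 0) + G (y 1))) x
      = (a + b) * advection (fun y => F (y 0) + G (y 1)) x := by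
  -- absorb `a - b` into the first factor to stay in the separable product form
  have hsep : advection (fun y => F (y 0) + G (y 1))
      = fun y => (fun t => (a - b) * deriv F t) (y 0) * deriv G (y 1) :=
    advection_add_sep hF hG
  rw [hsep, lap_mul_sep_of_satisfiesHelmholtz (hF.deriv.const_mul _) hG.deriv]
  ring

end Helmholtz

theorem stmt19_general (k₁ k₂ α₁ β₁ α₂ β₂ : ℝ) (x : E2) :
    -(lap (fun y => ∑ i : Fin 2,
        gradPerp (psiK k₁ k₂ α₁ β₁ α₂ β₂) y i * pd i (lap (psiK k₁ k₂ α₁ β₁ α₂ β₂)) y) x)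
      = (k₁^2 + k₂^2) * ∑ i : Fin 2,
          gradPerp (psiK k₁ k₂ α₁ β₁ α₂ β₂) x i
            * pd i (lap (psiK k₁ k₂ α₁ β₁ α₂ β₂)) x := by
  have hψ : psiK k₁ k₂ α₁ β₁ α₂ β₂
      = fun y => (fun t => α₁ * Real.sin (k₁ * t) + β₁ * Real.cos (k₁ * t)) (y 0)
          + (fun t => α₂ * Real.sin (k₂ * t) + β₂ * Real.cos (k₂ * t)) (y 1) := by
    funext y
    simp only [psiK]
    ring
  rw [hψ]
  exact neg_lap_advection_add_sep (satisfiesHelmholtz_sinusoid k₁ α₁ β₁)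
    (satisfiesHelmholtz_sinusoid k₂ α₂ β₂) x

/-- With `ψ` a sum of two one-dimensional eigenfunctions with orthogonal spectral
supports, `u = ∇^⊥ψ`, `ω = Δψ`, the nonlinearity `g = u·∇ω` (the vorticity form of
`B(u,u)`) satisfies `−Δg = (k₁² + k₂²)g`: a Kolmogorov force `f = B(u,u)` for the
steady Euler flow `u`. -/
theorem stmt19 (k₁ k₂ α₁ β₁ α₂ β₂ : ℝ) (hk₁ : 0 < k₁) (hk₂ : 0 < k₂) (x : E2) :
    -(lap (fun y => ∑ i : Fin 2,
        gradPerp (psiK k₁ k₂ α₁ β₁ α₂ β₂) y i * pd i (lap (psiK k₁ k₂ α₁ β₁ α₂ β₂)) y) x)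
      = (k₁^2 + k₂^2) * ∑ i : Fin 2,
          gradPerp (psiK k₁ k₂ α₁ β₁ α₂ β₂) x i
            * pd i (lap (psiK k₁ k₂ α₁ β₁ α₂ β₂)) x :=
  stmt19_general k₁ k₂ α₁ β₁ α₂ β₂ x
end
end
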